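/- arXiv:1411.4382 — 2 statements merged into one kernel-verified Lean document; each statement's English description precedes it below -/
import Mathlib

section
/- Let E be a real finite-dimensional Euclidean space and f : E → ℝ ∪ {+∞} a proper extended real-valued function that is invex in terms of the lower Hadamard directional derivative. Then f is second-order invex in terms of the lower Hadamard derivatives. -/
open Filter Topology

/-- The lower Hadamard directional derivative
`f⁻(x;u) = liminf_{t↓0, u'→u} (f(x+tu') − f(x))/t`, with values in `EReal`. -/
noncomputable def hadamardD1 {E : Type*} [NormedAddCommGroup E] [InnerProductSpace ℝ E]
    (f : E → EReal) (x u : E) : EReal :=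
  Filter.liminf
    (fun p : ℝ × E => (((p.1)⁻¹ : ℝ) : EReal) * (f (x + p.1 • p.2) - f x))
    ((𝓝[>] (0 : ℝ)) ×ˢ 𝓝 u)

/-- The lower Hadamard subdifferential
`∂⁻f(x) = {x* continuous linear | x*(u) ≤ f⁻(x;u) for all u}`. -/
def hadamardSubdiff {E : Type*} [NormedAddCommGroup E] [InnerProductSpace ℝ E]
    (f : E → EReal) (x : E) : Set (E →L[ℝ] ℝ) :=
  {xs | ∀ u : E, ((xs u : ℝ) : EReal) ≤ hadamardD1 f x u}

/-- The lower second-order Hadamard derivative relative to `x₁ ∈ ∂⁻f(x)`: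
`f⁻²(x;x₁;u) = liminf_{t↓0, u'→u} 2(f(x+tu') − f(x) − t·x₁(u'))/t²`. -/
noncomputable def hadamardD2 {E : Type*} [NormedAddCommGroup E] [InnerProductSpace ℝ E]
    (f : E → EReal) (x : E) (x₁ : E →L[ℝ] ℝ) (u : E) : EReal :=
  Filter.liminf
    (fun p : ℝ × E =>
      ((2 / p.1 ^ 2 : ℝ) : EReal) * (f (x + p.1 • p.2) - f x - ((p.1 * x₁ p.2 : ℝ) : EReal)))
    ((𝓝[>] (0 : ℝ)) ×ˢ 𝓝 u)

/-- `f` is invex in terms of the lower Hadamard directional derivative: there is a map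
`η : E × E → E` with `f(y) − f(x) ≥ f⁻(x;η(x,y))` for all `x ∈ dom f` and `y ∈ E`. -/
def InvexHadamard {E : Type*} [NormedAddCommGroup E] [InnerProductSpace ℝ E]
    (f : E → EReal) : Prop :=
  ∃ η : E × E → E, ∀ x : E, f x ≠ ⊤ → ∀ y : E, hadamardD1 f x (η (x, y)) ≤ f y - f x

/-- `f` is second-order invex in terms of the lower Hadamard derivatives. -/
def SecondOrderInvex {E : Type*} [NormedAddCommGroup E] [InnerProductSpace ℝ E]
    (f : E → EReal) : Prop :=
  ∀ x₀ : E, f x₀ ≠ ⊤ → ∀ x : E, (0 : E →L[ℝ] ℝ) ∈ hadamardSubdiff f x₀ →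
    ∃ η₁ η₂ : E, hadamardD1 f x₀ η₁ + hadamardD2 f x₀ 0 η₂ ≤ f x - f x₀

/-- At `u' = 0` the quotient is `2 (f x - f x) / t² ≤ 0`, also when `f x = ±∞`: in `EReal`,
`⊤ - ⊤ = ⊥ - ⊥ = ⊥`. -/
theorem hadamardD2_zero_nonpos {E : Type*} [NormedAddCommGroup E] [InnerProductSpace ℝ E]
    (f : E → EReal) (x : E) (x₁ : E →L[ℝ] ℝ) : hadamardD2 f x x₁ 0 ≤ 0 := by
  have hquot : ∀ t : ℝ, ((2 / t ^ 2 : ℝ) : EReal) *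
      (f (x + t • (0 : E)) - f x - ((t * x₁ 0 : ℝ) : EReal)) ≤ 0 := fun t => by
    refine EReal.mul_nonpos_iff.2 (Or.inl ⟨EReal.coe_nonneg.2 (by positivity), ?_⟩)
    simpa using EReal.sub_self_le_zero
  have hfreq : ∃ᶠ p : ℝ × E in 𝓝[>] 0 ×ˢ pure 0, ((2 / p.1 ^ 2 : ℝ) : EReal) *
      (f (x + p.1 • p.2) - f x - ((p.1 * x₁ p.2 : ℝ) : EReal)) ≤ 0 := by
    rw [prod_pure, frequently_map]
    exact (Eventually.of_forall hquot).frequently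
  exact liminf_le_of_frequently_le' (hfreq.filter_mono (prod_mono le_rfl (pure_le_nhds 0)))

theorem invex_implies_secondOrderInvex_general
    {E : Type*} [NormedAddCommGroup E] [InnerProductSpace ℝ E]
    (f : E → EReal)
    (hinvex : InvexHadamard f) :
    SecondOrderInvex f := by
  obtain ⟨η, hη⟩ := hinvex
  intro x₀ hx₀ x _
  refine ⟨η (x₀, x), 0, ?_⟩
  calc hadamardD1 f x₀ (η (x₀, x)) + hadamardD2 f x₀ 0 0
      ≤ hadamardD1 f x₀ (η (x₀, x)) := add_le_of_nonpos_right (hadamardD2_zero_nonpos f x₀ 0)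
    _ ≤ f x - f x₀ := hη x₀ hx₀ x

/-- Every invex (in terms of the lower Hadamard directional derivative)
proper extended real-valued function is second-order invex. -/
theorem invex_implies_secondOrderInvex
    {E : Type*} [NormedAddCommGroup E] [InnerProductSpace ℝ E] [FiniteDimensional ℝ E]
    (f : E → EReal) (hproper : (∀ x, f x ≠ ⊥) ∧ ∃ x, f x ≠ ⊤)
    (hinvex : InvexHadamard f) :
    SecondOrderInvex f :=
  invex_implies_secondOrderInvex_general f hinvex
end

section
/- Let E be a real finite-dimensional Euclidean space and f : E → ℝ ∪ {+∞} a proper extended real-valued function that is strongly pseudoconvex at x̄ ∈ dom f in the Hadamard sense. Then x̄ is an isolated local minimizer of second order for f if and only if 0 ∈ ∂⁻f(x̄), i.e., if and only if f⁻(x̄;u) ≥ 0 for all u ∈ E. -/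
open Filter Topology

/-- `x̄` is an isolated local minimizer of second order for `f`. -/
def IsolatedLocalMinOrder2 {E : Type*} [NormedAddCommGroup E] [InnerProductSpace ℝ E]
    (f : E → EReal) (x₀ : E) : Prop :=
  ∃ C : ℝ, 0 < C ∧ ∃ N ∈ 𝓝 x₀, ∀ x ∈ N, x ≠ x₀ →
    f x₀ + ((C * ‖x - x₀‖ ^ 2 : ℝ) : EReal) < f x

/-
If `x₀` is an isolated minimizer of second order it is in particular a local minimizer, so every
difference quotient `(f (x₀ + t u') - f x₀) / t` is eventually nonnegative and `f⁻(x₀; u) ≥ 0`.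
Conversely, let `f⁻(x₀; ·) ≥ 0`. In a unit direction `d` with `f⁻(x₀; d) = 0` strong
pseudoconvexity gives quadratic growth on a cone around `d`; if `f⁻(x₀; d) > c > 0` one has even
linear growth `f (x₀ + t d') ≥ f x₀ + c t` on such a cone, which dominates `(c / δ) t²` for
`t < δ`. Compactness of the unit sphere makes these cones and constants uniform.
-/

open Metric

namespace EReal

lemma coe_add_mul_le_of_lt_inv_mul_sub {a c t : ℝ} {y : EReal} (ht : 0 < t)
    (h : (c : EReal) < ((t⁻¹ : ℝ) : EReal) * (y - a)) : (a : EReal) + (c * t : ℝ) ≤ y := by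
  induction y using EReal.rec with
  | bot => simp [coe_mul_bot_of_pos (inv_pos.2 ht)] at h
  | coe y =>
    rw [← coe_sub, ← coe_mul, EReal.coe_lt_coe_iff, inv_mul_eq_div, lt_div_iff₀ ht] at h
    rw [← coe_add, EReal.coe_le_coe_iff]
    linarith
  | top => exact le_top

end EReal

lemma tendsto_add_smul_nhdsGT_prod_nhds {F : Type*} [NormedAddCommGroup F] [NormedSpace ℝ F]
    (x₀ u : F) :
    Tendsto (fun p : ℝ × F => x₀ + p.1 • p.2) ((𝓝[>] (0 : ℝ)) ×ˢ 𝓝 u) (𝓝 x₀) := by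
  have hcont : Continuous fun p : ℝ × F => x₀ + p.1 • p.2 := by fun_prop
  have h := hcont.tendsto (0, u)
  rw [nhds_prod_eq] at h
  simpa using h.mono_left (Filter.prod_mono nhdsWithin_le_nhds le_rfl)

section

variable {E : Type*} [NormedAddCommGroup E] [InnerProductSpace ℝ E] {f : E → EReal} {x₀ : E}

lemma zero_mem_hadamardSubdiff_iff :
    (0 : E →L[ℝ] ℝ) ∈ hadamardSubdiff f x₀ ↔ ∀ u, 0 ≤ hadamardD1 f x₀ u := by
  simp [hadamardSubdiff]

lemma IsLocalMin.hadamardD1_nonneg (h : IsLocalMin f x₀) (htop : f x₀ ≠ ⊤) (hbot : f x₀ ≠ ⊥)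
    (u : E) : 0 ≤ hadamardD1 f x₀ u := by
  refine le_liminf_of_le (by isBoundedDefault) ?_
  filter_upwards [(tendsto_add_smul_nhdsGT_prod_nhds x₀ u).eventually h,
    Eventually.prod_inl self_mem_nhdsWithin _] with p hmin (hpos : 0 < p.1)
  exact EReal.mul_nonneg (EReal.coe_nonneg.2 (inv_nonneg.2 hpos.le))
    ((EReal.sub_nonneg (.inr htop) (.inr hbot)).2 hmin)

lemma IsolatedLocalMinOrder2.isLocalMin (h : IsolatedLocalMinOrder2 f x₀) : IsLocalMin f x₀ := by
  obtain ⟨C, hC, N, hN, hlt⟩ := h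
  filter_upwards [hN] with x hx
  rcases eq_or_ne x x₀ with rfl | hne
  · exact le_rfl
  · exact (le_add_of_nonneg_right (EReal.coe_nonneg.2 (by positivity))).trans (hlt x hx hne).le

/-- The conclusion of strong pseudoconvexity (in the Hadamard sense) at `x₀` in direction `d`. -/
def QuadraticGrowthAlong (f : E → EReal) (x₀ d : E) : Prop :=
  ∃ ε : ℝ, 0 < ε ∧ ∃ δ : ℝ, 0 < δ ∧ ∃ α : ℝ, 0 < α ∧
    ∀ t : ℝ, 0 ≤ t → t < δ → ∀ d' : E, ‖d'‖ = 1 → ‖d' - d‖ < ε →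
      f x₀ + ((α * t ^ 2 : ℝ) : EReal) ≤ f (x₀ + t • d')

lemma quadraticGrowthAlong_of_pos_hadamardD1 {d : E} (htop : f x₀ ≠ ⊤) (hbot : f x₀ ≠ ⊥)
    (hpos : 0 < hadamardD1 f x₀ d) : QuadraticGrowthAlong f x₀ d := by
  obtain ⟨a, ha⟩ : ∃ a : ℝ, f x₀ = a := ⟨_, (EReal.coe_toReal htop hbot).symm⟩
  obtain ⟨c, hc0, hc⟩ := EReal.exists_between_coe_real hpos
  obtain ⟨T, hT, U, hU, hquot⟩ :=
    eventually_prod_iff.1 (eventually_lt_of_lt_liminf hc (by isBoundedDefault))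
  obtain ⟨δ, hδ, hδT⟩ := mem_nhdsGT_iff_exists_Ioo_subset.1 hT
  obtain ⟨ε, hε, hεU⟩ := Metric.eventually_nhds_iff.1 hU
  have hc0 : 0 < c := EReal.coe_pos.1 hc0
  refine ⟨ε, hε, δ, hδ, c / δ, div_pos hc0 hδ, fun t ht0 htδ d' _ hd' => ?_⟩
  rcases ht0.eq_or_lt with rfl | ht0
  · simp [ha]
  have hlin : (a : EReal) + (c * t : ℝ) ≤ f (x₀ + t • d') := by
    refine EReal.coe_add_mul_le_of_lt_inv_mul_sub ht0 ?_
    rw [← ha]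
    exact hquot (hδT ⟨ht0, htδ⟩) (hεU (by rwa [dist_eq_norm]))
  refine le_trans ?_ hlin
  rw [ha]
  refine add_le_add_right (EReal.coe_le_coe_iff.2 ?_) _
  calc c / δ * t ^ 2 = c * t * (t / δ) := by ring
    _ ≤ c * t * 1 := by gcongr; exact (div_le_one hδ).2 htδ.le
    _ = c * t := mul_one _

lemma QuadraticGrowthAlong.eventually {d : E} (h : QuadraticGrowthAlong f x₀ d) :
    ∀ᶠ z : (ℝ × ℝ) × E in 𝓝 ((0, 0), d), ‖z.2‖ = 1 → 0 ≤ z.1.2 →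
      f x₀ + ((z.1.1 * z.1.2 ^ 2 : ℝ) : EReal) ≤ f (x₀ + z.1.2 • z.2) := by
  obtain ⟨ε, hε, δ, hδ, α, hα, hgrowth⟩ := h
  rw [nhds_prod_eq, nhds_prod_eq]
  filter_upwards [prod_mem_prod (prod_mem_prod (gt_mem_nhds hα) (gt_mem_nhds hδ))
    (ball_mem_nhds d hε)]
  rintro ⟨⟨β, t⟩, d'⟩ ⟨⟨hβ, ht⟩, hd'⟩ hunit ht0
  refine le_trans (add_le_add_right (EReal.coe_le_coe_iff.2 ?_) _)
    (hgrowth t ht0 ht d' hunit (by rwa [← dist_eq_norm]))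
  exact mul_le_mul_of_nonneg_right (le_of_lt hβ) (sq_nonneg t)

lemma isolatedLocalMinOrder2_of_forall_quadraticGrowthAlong [FiniteDimensional ℝ E]
    (htop : f x₀ ≠ ⊤) (hbot : f x₀ ≠ ⊥) (h : ∀ d : E, ‖d‖ = 1 → QuadraticGrowthAlong f x₀ d) :
    IsolatedLocalMinOrder2 f x₀ := by
  obtain ⟨a, ha⟩ : ∃ a : ℝ, f x₀ = a := ⟨_, (EReal.coe_toReal htop hbot).symm⟩
  -- The growth constant is a coordinate of the parameter tending to `0`, so compactness of the
  -- sphere makes `ε`, `δ` and `α` uniform in the direction.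
  have huniform : ∀ᶠ p : ℝ × ℝ in 𝓝 (0, 0), ∀ d ∈ sphere (0 : E) 1, ‖d‖ = 1 → 0 ≤ p.2 →
      f x₀ + ((p.1 * p.2 ^ 2 : ℝ) : EReal) ≤ f (x₀ + p.2 • d) :=
    (isCompact_sphere (0 : E) 1).eventually_forall_of_forall_eventually fun d hd =>
      (h d (mem_sphere_zero_iff_norm.1 hd)).eventually
  obtain ⟨r, hr, hball⟩ := Metric.eventually_nhds_iff.1 huniform
  refine ⟨r / 4, by positivity, ball x₀ (r / 2), ball_mem_nhds _ (by positivity),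
    fun x hx hne => ?_⟩
  set t := ‖x - x₀‖
  have ht : 0 < t := norm_pos_iff.2 (sub_ne_zero.2 hne)
  have htr : t < r / 2 := by rwa [mem_ball, dist_eq_norm] at hx
  have hdist : dist ((r / 2, t) : ℝ × ℝ) (0, 0) < r := by
    rw [Prod.dist_eq, Real.dist_0_eq_abs, Real.dist_0_eq_abs, abs_of_pos (by positivity),
      abs_of_pos ht]
    exact max_lt (by linarith) (by linarith)
  have hunit : ‖t⁻¹ • (x - x₀)‖ = 1 := norm_smul_inv_norm (sub_ne_zero.2 hne)
  have hgrowth := hball hdist _ (mem_sphere_zero_iff_norm.2 hunit) hunit ht.le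
  rw [smul_inv_smul₀ ht.ne', add_sub_cancel] at hgrowth
  refine lt_of_lt_of_le ?_ hgrowth
  rw [ha, ← EReal.coe_add, ← EReal.coe_add, EReal.coe_lt_coe_iff]
  nlinarith [mul_pos hr (pow_pos ht 2)]

end

/-- Let `f` be a proper extended real-valued function, strongly
pseudoconvex at `x̄ ∈ dom f` in the Hadamard sense. Then `x̄` is an isolated local
minimizer of second order if and only if `0 ∈ ∂⁻f(x̄)`. -/
theorem strongly_pseudoconvex_hadamard_isolated_min_iff
    {E : Type*} [NormedAddCommGroup E] [InnerProductSpace ℝ E] [FiniteDimensional ℝ E]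
    (f : E → EReal) (hproper : (∀ x, f x ≠ ⊥) ∧ ∃ x, f x ≠ ⊤)
    (x₀ : E) (hdom : f x₀ ≠ ⊤)
    (hspc : ∀ d : E, ‖d‖ = 1 → hadamardD1 f x₀ d = 0 →
      ∃ ε : ℝ, 0 < ε ∧ ∃ δ : ℝ, 0 < δ ∧ ∃ α : ℝ, 0 < α ∧
        ∀ t : ℝ, 0 ≤ t → t < δ → ∀ d' : E, ‖d'‖ = 1 → ‖d' - d‖ < ε →
          f x₀ + ((α * t ^ 2 : ℝ) : EReal) ≤ f (x₀ + t • d')) :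
    IsolatedLocalMinOrder2 f x₀ ↔ (0 : E →L[ℝ] ℝ) ∈ hadamardSubdiff f x₀ := by
  have hbot := hproper.1 x₀
  rw [zero_mem_hadamardSubdiff_iff]
  refine ⟨fun hmin => hmin.isLocalMin.hadamardD1_nonneg hdom hbot, fun hnonneg => ?_⟩
  refine isolatedLocalMinOrder2_of_forall_quadraticGrowthAlong hdom hbot fun d hd => ?_
  rcases (hnonneg d).eq_or_lt with hzero | hpos
  · exact hspc d hd hzero.symm
  · exact quadraticGrowthAlong_of_pos_hadamardD1 hdom hbot hpos
end
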